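/- arXiv:2011.12465 — 2 statements merged into one kernel-verified Lean document; each statement's English description precedes it below -/
import Mathlib

section
/- After applying the optimal scaling s* = Σ_i⟨a_i, b̃_i⟩ / Σ_i||b̃_i||^2 to a rotated set B̃ = B R (where R is the SVD-optimal rotation for aligning B to A), no further rotation about the origin of s*B̃ can reduce the sum of squared errors Σ_i ||a_i - b'_i||^2; i.e., the identity is an optimal orthogonal transformation for aligning s*B̃ to A. -/
open Matrix BigOperators

lemma sum_sq_vecMul_orth {d : ℕ} (Q : Matrix (Fin d) (Fin d) ℝ) (hQ : Q * Qᵀ = 1)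
    (x : Fin d → ℝ) : ∑ k, ((x ᵥ* Q) k) ^ 2 = ∑ k, (x k) ^ 2 := by
  have hdelta : ∀ j j' : Fin d, ∑ k, Q j k * Q j' k = if j = j' then 1 else 0 := by
    intro j j'
    have := congrFun (congrFun hQ j) j'
    simpa [Matrix.mul_apply, Matrix.one_apply] using this
  simp only [Matrix.vecMul, dotProduct]
  calc ∑ k, (∑ j, x j * Q j k) ^ 2
      = ∑ k, ∑ j, ∑ j', (x j * Q j k) * (x j' * Q j' k) := by
        refine Finset.sum_congr rfl fun k _ => ?_
        rw [pow_two, Finset.sum_mul_sum]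
    _ = ∑ j, ∑ j', ∑ k, (x j * Q j k) * (x j' * Q j' k) := by
        rw [Finset.sum_comm]
        exact Finset.sum_congr rfl fun j _ => Finset.sum_comm
    _ = ∑ j, ∑ j', x j * x j' * ∑ k, Q j k * Q j' k := by
        refine Finset.sum_congr rfl fun j _ => Finset.sum_congr rfl fun j' _ => ?_
        rw [Finset.mul_sum]; exact Finset.sum_congr rfl fun k _ => by ring
    _ = ∑ j, (x j) ^ 2 := by
        refine Finset.sum_congr rfl fun j _ => ?_
        simp only [hdelta]
        rw [Finset.sum_eq_single j]
        · simp [pow_two]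
        · intro j' _ h; simp [Ne.symm h]
        · intro h; simp at h

lemma expand_sq_sum {n d : ℕ} (a c : Fin n → Fin d → ℝ) :
    ∑ i, ∑ k, (a i k - c i k) ^ 2
      = ∑ i, ∑ k, (a i k) ^ 2 - 2 * ∑ i, ∑ k, a i k * c i k
        + ∑ i, ∑ k, (c i k) ^ 2 := by
  have h : ∀ i k, (a i k - c i k) ^ 2
      = (a i k) ^ 2 - 2 * (a i k * c i k) + (c i k) ^ 2 := by intros; ring
  simp only [h, Finset.sum_add_distrib, Finset.sum_sub_distrib, ← Finset.mul_sum]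

/-- After applying the optimal rotation R and then the optimal scaling s*, no
further rotation about the origin can reduce the sum of squared errors: the
identity is an optimal orthogonal transformation for aligning s*B̃ to A. -/
theorem no_rotation_after_scaling {n d : ℕ} (a b : Fin n → Fin d → ℝ)
    (R : Matrix (Fin d) (Fin d) ℝ) (hR : R * Rᵀ = 1)
    (hRopt : ∀ Q : Matrix (Fin d) (Fin d) ℝ, Q * Qᵀ = 1 →
      ∑ i, ∑ k, (a i k - (b i ᵥ* R) k) ^ 2 ≤ ∑ i, ∑ k, (a i k - (b i ᵥ* Q) k) ^ 2)
    (bt : Fin n → Fin d → ℝ) (hbt : ∀ i, bt i = b i ᵥ* R)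
    (s : ℝ)
    (hs : s = (∑ i, ∑ k, a i k * bt i k) / (∑ i, ∑ k, (bt i k) ^ 2)) :
    ∀ Q : Matrix (Fin d) (Fin d) ℝ, Q * Qᵀ = 1 →
      ∑ i, ∑ k, (a i k - s * bt i k) ^ 2 ≤
      ∑ i, ∑ k, (a i k - ((fun l => s * bt i l) ᵥ* Q) k) ^ 2 := by
  intro Q hQ
  -- F P = correlation of a with b ᵥ* P
  set F : Matrix (Fin d) (Fin d) ℝ → ℝ := fun P => ∑ i, ∑ k, a i k * (b i ᵥ* P) k with hF
  -- From optimality of R: F P ≤ F R for orthogonal P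
  have hFle : ∀ P : Matrix (Fin d) (Fin d) ℝ, P * Pᵀ = 1 → F P ≤ F R := by
    intro P hP
    have h1 := hRopt P hP
    have e1 := expand_sq_sum a (fun i => b i ᵥ* R)
    have e2 := expand_sq_sum a (fun i => b i ᵥ* P)
    have n1 : ∑ i, ∑ k, ((b i ᵥ* R) k) ^ 2 = ∑ i, ∑ k, (b i k) ^ 2 :=
      Finset.sum_congr rfl fun i _ => sum_sq_vecMul_orth R hR (b i)
    have n2 : ∑ i, ∑ k, ((b i ᵥ* P) k) ^ 2 = ∑ i, ∑ k, (b i k) ^ 2 :=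
      Finset.sum_congr rfl fun i _ => sum_sq_vecMul_orth P hP (b i)
    rw [e1, e2, n1, n2] at h1
    simp only [hF]
    linarith
  -- numerator N and denominator D
  have hN : ∑ i, ∑ k, a i k * bt i k = F R := by
    simp only [hF]
    exact Finset.sum_congr rfl fun i _ => by rw [hbt]
  have hnegR : (-R) * (-R)ᵀ = 1 := by simpa using hR
  have hFnegR : F (-R) = -F R := by
    simp only [hF]
    rw [← Finset.sum_neg_distrib]
    refine Finset.sum_congr rfl fun i _ => ?_
    rw [← Finset.sum_neg_distrib]
    refine Finset.sum_congr rfl fun k _ => ?_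
    simp [Matrix.vecMul, dotProduct, Finset.sum_neg_distrib, Finset.mul_sum]
  have hFRnonneg : 0 ≤ F R := by
    have := hFle (-R) hnegR
    rw [hFnegR] at this; linarith
  have hDnonneg : 0 ≤ ∑ i, ∑ k, (bt i k) ^ 2 :=
    Finset.sum_nonneg fun i _ => Finset.sum_nonneg fun k _ => sq_nonneg _
  have hs0 : 0 ≤ s := by
    rw [hs, hN]; exact div_nonneg hFRnonneg hDnonneg
  -- orthogonality of R * Q
  have hRQ : (R * Q) * (R * Q)ᵀ = 1 := by
    rw [Matrix.transpose_mul, Matrix.mul_assoc, ← Matrix.mul_assoc Q, hQ, Matrix.one_mul, hR]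
  have hFRQ : F (R * Q) ≤ F R := hFle (R * Q) hRQ
  -- rewrite both sides using expansion
  have eL := expand_sq_sum a (fun i k => s * bt i k)
  have eR := expand_sq_sum a (fun i => (fun l => s * bt i l) ᵥ* Q)
  rw [eL, eR]
  -- identify pieces
  have hsmul : ∀ i k, ((fun l => s * bt i l) ᵥ* Q) k = s * ((bt i ᵥ* Q) k) := by
    intro i k
    simp [Matrix.vecMul, dotProduct, Finset.mul_sum, mul_assoc]
  have hcorrR : ∑ i, ∑ k, a i k * ((fun l => s * bt i l) ᵥ* Q) k
      = s * F (R * Q) := by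
    simp only [hF, Finset.mul_sum]
    refine Finset.sum_congr rfl fun i _ => Finset.sum_congr rfl fun k _ => ?_
    rw [hsmul, hbt, Matrix.vecMul_vecMul]; ring
  have hcorrI : ∑ i, ∑ k, a i k * (s * bt i k) = s * F R := by
    rw [← hN]
    simp only [Finset.mul_sum]
    exact Finset.sum_congr rfl fun i _ => Finset.sum_congr rfl fun k _ => by ring
  have hnorm : ∑ i, ∑ k, (((fun l => s * bt i l) ᵥ* Q) k) ^ 2
      = ∑ i, ∑ k, (s * bt i k) ^ 2 := by
    refine Finset.sum_congr rfl fun i _ => ?_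
    calc ∑ k, (((fun l => s * bt i l) ᵥ* Q) k) ^ 2
        = ∑ k, (s * (bt i ᵥ* Q) k) ^ 2 := by
          exact Finset.sum_congr rfl fun k _ => by rw [hsmul]
      _ = s ^ 2 * ∑ k, ((bt i ᵥ* Q) k) ^ 2 := by
          rw [Finset.mul_sum]; exact Finset.sum_congr rfl fun k _ => by ring
      _ = s ^ 2 * ∑ k, (bt i k) ^ 2 := by rw [sum_sq_vecMul_orth Q hQ]
      _ = ∑ k, (s * bt i k) ^ 2 := by
          rw [Finset.mul_sum]; exact Finset.sum_congr rfl fun k _ => by ring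
  rw [hcorrR, hcorrI, hnorm]
  have : s * F (R * Q) ≤ s * F R := mul_le_mul_of_nonneg_left hFRQ hs0
  linarith
end

section
/- If H = Σ_i b_i^T a_i has singular value decomposition H = U S V^T with U, V orthogonal, then R = U V^T maximizes trace(R^T H) = Σ_i ⟨a_i, b_i R⟩ over all d×d orthogonal matrices R, with maximum value equal to the sum of the singular values (the trace of S). -/
open Matrix BigOperators

lemma trace_mul_diag {d : ℕ} (W S : Matrix (Fin d) (Fin d) ℝ)
    (hSdiag : ∀ k k' : Fin d, k ≠ k' → S k k' = 0) :
    Matrix.trace (W * S) = ∑ k, W k k * S k k := by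
  simp only [Matrix.trace, Matrix.diag, Matrix.mul_apply]
  refine Finset.sum_congr rfl fun k _ => ?_
  rw [Finset.sum_eq_single k]
  · intro j _ hj
    rw [hSdiag j k hj, mul_zero]
  · intro h; exact absurd (Finset.mem_univ k) h

/-- If H = Σᵢ bᵢᵀ aᵢ = U S Vᵀ is an SVD, then R = U Vᵀ maximizes
trace(Rᵀ H) = Σᵢ ⟨aᵢ, bᵢ R⟩ over orthogonal matrices, with maximum trace S. -/
theorem svd_rotation_maximizes_trace {n d : ℕ} (a b : Fin n → Fin d → ℝ)
    (H U S V : Matrix (Fin d) (Fin d) ℝ)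
    (hH : H = ∑ i, Matrix.vecMulVec (b i) (a i))
    (hU : U * Uᵀ = 1) (hV : V * Vᵀ = 1)
    (hsvd : H = U * S * Vᵀ)
    (hSdiag : ∀ k k' : Fin d, k ≠ k' → S k k' = 0)
    (hSpos : ∀ k : Fin d, 0 ≤ S k k) :
    (∀ Q : Matrix (Fin d) (Fin d) ℝ, Q * Qᵀ = 1 →
      Matrix.trace (Qᵀ * H) ≤ Matrix.trace ((U * Vᵀ)ᵀ * H)) ∧
    Matrix.trace ((U * Vᵀ)ᵀ * H) = Matrix.trace S ∧
    Matrix.trace ((U * Vᵀ)ᵀ * H) = ∑ i, ∑ k, a i k * (b i ᵥ* (U * Vᵀ)) k := by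
  have hU' : Uᵀ * U = 1 := mul_eq_one_comm.mp hU
  have hV' : Vᵀ * V = 1 := mul_eq_one_comm.mp hV
  -- maximum value
  have hmax : Matrix.trace ((U * Vᵀ)ᵀ * H) = Matrix.trace S := by
    rw [hsvd, Matrix.transpose_mul, Matrix.transpose_transpose]
    rw [show V * Uᵀ * (U * S * Vᵀ) = V * (Uᵀ * U) * S * Vᵀ by
      simp only [Matrix.mul_assoc], hU', Matrix.mul_one]
    rw [Matrix.trace_mul_comm, ← Matrix.mul_assoc, hV', Matrix.one_mul]
  refine ⟨?_, hmax, ?_⟩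
  · intro Q hQ
    have hQ' : Qᵀ * Q = 1 := mul_eq_one_comm.mp hQ
    set W := Vᵀ * Qᵀ * U with hW
    have hWW : W * Wᵀ = 1 := by
      rw [hW]
      simp only [Matrix.transpose_mul, Matrix.transpose_transpose]
      rw [show Vᵀ * Qᵀ * U * (Uᵀ * (Q * V)) = Vᵀ * (Qᵀ * ((U * Uᵀ) * (Q * V))) by
        simp only [Matrix.mul_assoc], hU, Matrix.one_mul, ← Matrix.mul_assoc,
        Matrix.mul_assoc, ← Matrix.mul_assoc Qᵀ Q V, hQ', Matrix.one_mul, hV']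
    have htr : Matrix.trace (Qᵀ * H) = Matrix.trace (W * S) := by
      rw [hsvd, hW]
      rw [show Qᵀ * (U * S * Vᵀ) = (Qᵀ * U * S) * Vᵀ by simp only [Matrix.mul_assoc],
        Matrix.trace_mul_comm]
      congr 1; simp only [Matrix.mul_assoc]
    rw [htr, hmax, trace_mul_diag W S hSdiag]
    have hdiag_le : ∀ k : Fin d, W k k ≤ 1 := by
      intro k
      have h1 : (W * Wᵀ) k k = 1 := by rw [hWW]; simp
      have h2 : ∑ j, W k j * W k j = 1 := by
        simpa [Matrix.mul_apply, Matrix.transpose_apply] using h1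
      have h3 : W k k * W k k ≤ 1 := by
        rw [← h2]
        exact Finset.single_le_sum (f := fun j => W k j * W k j)
          (fun j _ => mul_self_nonneg _) (Finset.mem_univ k)
      nlinarith
    calc ∑ k, W k k * S k k ≤ ∑ k, S k k := by
          refine Finset.sum_le_sum fun k _ => ?_
          calc W k k * S k k ≤ 1 * S k k :=
                mul_le_mul_of_nonneg_right (hdiag_le k) (hSpos k)
            _ = S k k := one_mul _
      _ = Matrix.trace S := by simp [Matrix.trace, Matrix.diag]
  · rw [hH, Matrix.mul_sum, Matrix.trace_sum]
    refine Finset.sum_congr rfl fun i _ => ?_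
    simp only [Matrix.trace, Matrix.diag, Matrix.mul_apply, Matrix.vecMulVec_apply,
      Matrix.vecMul, dotProduct, Matrix.transpose_apply]
    refine Finset.sum_congr rfl fun k _ => ?_
    rw [Finset.mul_sum]
    refine Finset.sum_congr rfl fun j _ => ?_
    ring
end
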